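/- Let A ∈ ℂ^{n1×n2×n3} and suppose A = U *_c S *_c V^H, where U ∈ ℂ^{n1×n1×n3} and V ∈ ℂ^{n2×n2×n3} are unitary tensors and S ∈ ℂ^{n1×n2×n3} is an F-diagonal tensor (a C-SVD of A). Then the Moore-Penrose inverse of A is A^† = V *_c S^† *_c U^H. -/

import Mathlib

noncomputable section

/-- A third-order tensor: a family of frontal slices. -/
abbrev Tensor (n1 n2 n3 : ℕ) : Type := Fin n3 → Matrix (Fin n1) (Fin n2) ℂ

namespace Tensor

/-- The block Toeplitz-plus-Hankel matrix `mat(A)` associated to a tensor. -/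
def matT {n1 n2 n3 : ℕ} (A : Tensor n1 n2 n3) :
    Matrix (Fin n3 × Fin n1) (Fin n3 × Fin n2) ℂ := fun p q =>
  A ⟨p.1.1 - q.1.1 + (q.1.1 - p.1.1), by
        have h1 := p.1.isLt; have h2 := q.1.isLt; omega⟩ p.2 q.2 +
    (if h : p.1.1 + q.1.1 + 2 ≤ n3 then A ⟨p.1.1 + q.1.1 + 1, by omega⟩ p.2 q.2
     else if h2 : n3 ≤ p.1.1 + q.1.1 then
       A ⟨2 * n3 - (p.1.1 + q.1.1) - 1, by have h1 := p.1.isLt; omega⟩ p.2 q.2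
     else 0)

/-- `ten`, the inverse of `mat` on its range: the slices of a tensor are recovered
from the first block-column of its `mat` by an alternating sum. -/
def tenT {n1 n2 n3 : ℕ} (M : Matrix (Fin n3 × Fin n1) (Fin n3 × Fin n2) ℂ) :
    Tensor n1 n2 n3 := fun i => Matrix.of fun a b =>
  ∑ t : Fin n3, if i.1 ≤ t.1 then (-1 : ℂ) ^ (t.1 - i.1) * M (t, a) (⟨0, i.pos⟩, b) else 0

/-- The C-product of two tensors: the unique tensor whose `mat` is `mat(A) * mat(B)`. -/
def cmul {n1 n2 l n3 : ℕ} (A : Tensor n1 n2 n3) (B : Tensor n2 l n3) : Tensor n1 l n3 :=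
  tenT (matT A * matT B)

/-- The conjugate transpose of a tensor, taken slice-wise. -/
def conjT {n1 n2 n3 : ℕ} (A : Tensor n1 n2 n3) : Tensor n2 n1 n3 := fun i => (A i).conjTranspose

/-- The identity tensor: the tensor whose `mat` is the identity matrix. -/
def idT {n n3 : ℕ} : Tensor n n n3 := fun i => if i.1 = 0 then 1 else 0

/-- A tensor is unitary if `Qᴴ *c Q = Q *c Qᴴ = I`. -/
def Unitary {n n3 : ℕ} (Q : Tensor n n n3) : Prop :=
  cmul (conjT Q) Q = idT ∧ cmul Q (conjT Q) = idT

/-- `X` is the inverse of the square tensor `B` under the C-product. -/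
def IsInverse {n n3 : ℕ} (B X : Tensor n n n3) : Prop :=
  cmul B X = idT ∧ cmul X B = idT

/-- `X` is the Moore-Penrose inverse of `A` under the C-product. -/
def IsMP {n1 n2 n3 : ℕ} (A : Tensor n1 n2 n3) (X : Tensor n2 n1 n3) : Prop :=
  cmul (cmul A X) A = A ∧ cmul (cmul X A) X = X ∧
    conjT (cmul A X) = cmul A X ∧ conjT (cmul X A) = cmul X A

/-- Powers of a square tensor with respect to the C-product. -/
def cpow {n n3 : ℕ} (A : Tensor n n n3) : ℕ → Tensor n n n3
  | 0 => idT
  | m + 1 => cmul (cpow A m) A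

/-- `ind(A) = k`: `k` is the smallest nonnegative integer with
`rank(mat(A)^k) = rank(mat(A)^(k+1))`. -/
def IsIndex {n n3 : ℕ} (A : Tensor n n n3) (k : ℕ) : Prop :=
  (matT A ^ k).rank = (matT A ^ (k + 1)).rank ∧
    ∀ j < k, (matT A ^ j).rank ≠ (matT A ^ (j + 1)).rank

/-- `X` is the Drazin inverse of `A` (of index `k`) under the C-product. -/
def IsDrazin {n n3 : ℕ} (A : Tensor n n n3) (k : ℕ) (X : Tensor n n n3) : Prop :=
  cmul (cpow A (k + 1)) X = cpow A k ∧ cmul (cmul X A) X = X ∧ cmul A X = cmul X A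

/-- `X` is an inverse of `A` along `G` under the C-product. -/
def IsInvAlong {n1 n2 n3 : ℕ} (A : Tensor n1 n2 n3) (G X : Tensor n2 n1 n3) : Prop :=
  cmul (cmul X A) G = G ∧ cmul (cmul G A) X = G ∧
    (∃ U : Tensor n1 n1 n3, X = cmul G U) ∧
    (∃ V : Tensor n2 n2 n3, conjT X = cmul (conjT G) V)

/-- All frontal slices are diagonal. -/
def FDiag {n1 n2 n3 : ℕ} (A : Tensor n1 n2 n3) : Prop :=
  ∀ (i : Fin n3) (a : Fin n1) (b : Fin n2), (a : ℕ) ≠ (b : ℕ) → A i a b = 0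

/-- All frontal slices are upper triangular. -/
def FUpper {n1 n2 n3 : ℕ} (A : Tensor n1 n2 n3) : Prop :=
  ∀ (i : Fin n3) (a : Fin n1) (b : Fin n2), (b : ℕ) < (a : ℕ) → A i a b = 0

/-- All frontal slices are lower triangular. -/
def FLower {n1 n2 n3 : ℕ} (A : Tensor n1 n2 n3) : Prop :=
  ∀ (i : Fin n3) (a : Fin n1) (b : Fin n2), (a : ℕ) < (b : ℕ) → A i a b = 0

/-- Slice-wise 2×2 block tensor `[[A, B],[C, D]]`. -/
def blockT {r s t u n3 : ℕ} (A : Tensor r t n3) (B : Tensor r u n3)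
    (C : Tensor s t n3) (D : Tensor s u n3) : Tensor (r + s) (t + u) n3 := fun i =>
  Matrix.reindex finSumFinEquiv finSumFinEquiv (Matrix.fromBlocks (A i) (B i) (C i) (D i))

/-- The mode-3 product of a tensor with an `n3 × n3` matrix. -/
def mode3 {n1 n2 n3 : ℕ} (A : Tensor n1 n2 n3) (M : Matrix (Fin n3) (Fin n3) ℂ) :
    Tensor n1 n2 n3 := fun l => ∑ i, M l i • A i

end Tensor

open Tensor

/-!
The map `matT` is injective, multiplicative (`matT (cmul A B) = matT A * matT B`), sends `conjT`
to `ᴴ` and `idT` to `1`; so the C-product obeys the laws of matrix algebra, and the Penrose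
equations for `U S Vᴴ` and `V S† Uᴴ` follow from those for `S` and `S†` by cancelling
`Uᴴ U = Vᴴ V = I`.

The substance is multiplicativity, i.e. that `matT A * matT B` lies in the range of `matT`.
Entrywise, `matT A` is `g (fold (i - j)) + g (fold (i + j + 1))` where `g` is a tube of `A` and
`fold` reflects an index into `[0, N]`. Such a kernel commutes with the nearest-neighbour sum
`x ↦ x (i + 1) + x (i - 1)` with reflecting boundary (`nbrMatrix`), so every `matT A`, and hence
every product of them, intertwines `nbrMatrix`. An intertwining matrix is determined by its first
block column, and on that column `matT ∘ tenT` is the identity.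
-/

lemma eq_of_add_succ_eq {G : Type*} [Add G] [IsRightCancelAdd G] {N : ℕ} {f g : ℕ → G}
    (hN : f N = g N) (h : ∀ i < N, f i + f (i + 1) = g i + g (i + 1)) {i : ℕ} (hi : i ≤ N) :
    f i = g i := by
  refine Nat.decreasingInduction (motive := fun i _ => f i = g i) (fun k hk ih => ?_) hN hi
  exact add_right_cancel (ih ▸ h k hk)

namespace Tensor

open scoped Matrix

variable {m n l r N : ℕ}

def tube (A : Tensor m n N) (a : Fin m) (b : Fin n) (k : ℕ) : ℂ :=
  if h : k < N then A ⟨k, h⟩ a b else 0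

lemma tube_of_le (A : Tensor m n N) (a : Fin m) (b : Fin n) {k : ℕ} (hk : N ≤ k) :
    tube A a b k = 0 :=
  dif_neg (by omega)

/-- In the Hankel part of `matT`, position `t ∈ (N, 2N)` reads slice `2N - t` and position `N`
reads nothing; as the tube vanishes at `N`, both parts of `matT` read the tube at `foldIndex`. -/
def foldIndex (N : ℕ) (t : ℤ) : ℕ := min t.natAbs (2 * N - t.natAbs)

def thKernel (N : ℕ) (g : ℕ → ℂ) (x y : ℤ) : ℂ :=
  g (foldIndex N (x - y)) + g (foldIndex N (x + y + 1))

lemma thKernel_comm (N : ℕ) (g : ℕ → ℂ) (x y : ℤ) :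
    thKernel N g x y = thKernel N g y x := by
  unfold thKernel foldIndex
  congr 2 <;> omega

lemma thKernel_neg_one (N : ℕ) (g : ℕ → ℂ) (y : ℤ) :
    thKernel N g (-1) y = thKernel N g 0 y := by
  unfold thKernel foldIndex
  rw [add_comm]
  congr 2 <;> omega

lemma thKernel_natCast_self (N : ℕ) (g : ℕ → ℂ) {y : ℤ} (hy0 : 0 ≤ y) (hy : y < N) :
    thKernel N g N y = thKernel N g (N - 1) y := by
  unfold thKernel foldIndex
  rw [add_comm]
  congr 2 <;> omega

lemma thKernel_succ_add_pred (N : ℕ) (g : ℕ → ℂ) (x y : ℤ) :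
    thKernel N g (x + 1) y + thKernel N g (x - 1) y =
      thKernel N g x (y + 1) + thKernel N g x (y - 1) := by
  unfold thKernel
  ring_nf

lemma matT_apply (A : Tensor m n N) (i j : Fin N) (a : Fin m) (b : Fin n) :
    matT A (i, a) (j, b) = thKernel N (tube A a b) i j := by
  obtain ⟨i, hi⟩ := i
  obtain ⟨j, hj⟩ := j
  have hToeplitz : foldIndex N (i - j) = i - j + (j - i) := by unfold foldIndex; omega
  have hHankel : foldIndex N (i + j + 1) = min (i + j + 1) (2 * N - (i + j + 1)) := by
    unfold foldIndex; omega
  simp only [matT, thKernel, hToeplitz, hHankel, tube]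
  congr 1
  · rw [dif_pos (by omega)]
  · split_ifs <;> first | rfl | (congr 2; omega)

/-- The neighbours of `i` in `Fin N`, reflected at the ends: `predRefl 0 = 0` by truncated
subtraction, `succRefl (N - 1) = N - 1`. -/
def succRefl (i : Fin N) : Fin N := ⟨min (i + 1) (N - 1), by omega⟩

def predRefl (i : Fin N) : Fin N := ⟨i - 1, by omega⟩

lemma thKernel_succRefl (g : ℕ → ℂ) (i j : Fin N) :
    thKernel N g (succRefl i) j = thKernel N g (i + 1) j := by
  rcases lt_or_eq_of_le (Nat.succ_le_of_lt i.isLt) with h | h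
  · congr 1
    simp only [succRefl]
    omega
  · have hs : ((succRefl i : ℕ) : ℤ) = N - 1 := by simp only [succRefl]; omega
    have hi : (i : ℤ) + 1 = N := by omega
    rw [hs, hi, thKernel_natCast_self N g (by omega) (by omega)]

lemma thKernel_predRefl (g : ℕ → ℂ) (i : Fin N) (y : ℤ) :
    thKernel N g (predRefl i) y = thKernel N g (i - 1) y := by
  rcases Nat.eq_zero_or_pos i with h | h
  · have hp : ((predRefl i : ℕ) : ℤ) = 0 := by simp only [predRefl]; omega
    rw [hp, h, Nat.cast_zero, zero_sub, thKernel_neg_one]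
  · congr 1
    simp only [predRefl]
    omega

def nbrMatrix (N m : ℕ) : Matrix (Fin N × Fin m) (Fin N × Fin m) ℂ := Matrix.of fun p q =>
  (if (succRefl p.1, p.2) = q then 1 else 0) + (if (predRefl p.1, p.2) = q then 1 else 0)

lemma nbrMatrix_comm (p q : Fin N × Fin m) : nbrMatrix N m p q = nbrMatrix N m q p := by
  obtain ⟨⟨i, hi⟩, a⟩ := p
  obtain ⟨⟨j, hj⟩, b⟩ := q
  by_cases hab : a = b
  · subst hab
    simp only [nbrMatrix, Matrix.of_apply, succRefl, predRefl, Prod.mk.injEq, Fin.mk.injEq,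
      and_true]
    split_ifs <;> first | rfl | (exfalso; omega) | norm_num
  · simp [nbrMatrix, hab, Ne.symm hab]

lemma nbrMatrix_mul_apply {κ : Type*} (M : Matrix (Fin N × Fin m) κ ℂ) (p : Fin N × Fin m)
    (q : κ) : (nbrMatrix N m * M) p q = M (succRefl p.1, p.2) q + M (predRefl p.1, p.2) q := by
  simp [Matrix.mul_apply, nbrMatrix, add_mul, Finset.sum_add_distrib]

lemma mul_nbrMatrix_apply {κ : Type*} [Fintype κ] (M : Matrix κ (Fin N × Fin n) ℂ) (p : κ)
    (q : Fin N × Fin n) :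
    (M * nbrMatrix N n) p q = M p (succRefl q.1, q.2) + M p (predRefl q.1, q.2) := by
  simp only [Matrix.mul_apply]
  rw [Finset.sum_congr rfl fun r _ => by rw [nbrMatrix_comm r q]]
  simp [nbrMatrix, mul_add, Finset.sum_add_distrib]

lemma nbrMatrix_mul_matT (A : Tensor m n N) :
    nbrMatrix N m * matT A = matT A * nbrMatrix N n := by
  ext ⟨i, a⟩ ⟨j, b⟩
  rw [nbrMatrix_mul_apply, mul_nbrMatrix_apply]
  simp only [matT_apply, thKernel_succRefl, thKernel_predRefl]
  rw [thKernel_comm _ _ i, thKernel_comm _ _ i, thKernel_succRefl, thKernel_predRefl,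
    thKernel_comm _ _ _ i, thKernel_comm _ _ _ i]
  exact thKernel_succ_add_pred N _ i j

lemma eq_of_nbrMatrix_intertwines {M M' : Matrix (Fin N × Fin m) (Fin N × Fin n) ℂ}
    (hM : nbrMatrix N m * M = M * nbrMatrix N n) (hM' : nbrMatrix N m * M' = M' * nbrMatrix N n)
    (h0 : ∀ p b (hN : 0 < N), M p (⟨0, hN⟩, b) = M' p (⟨0, hN⟩, b)) : M = M' := by
  set D := M - M'
  have hD : nbrMatrix N m * D = D * nbrMatrix N n := by
    rw [Matrix.mul_sub, Matrix.sub_mul, hM, hM']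
  suffices hcol : ∀ k (hk : k < N) p b, D p (⟨k, hk⟩, b) = 0 by
    ext p ⟨⟨k, hk⟩, b⟩
    exact sub_eq_zero.mp (hcol k hk p b)
  intro k
  induction k using Nat.strong_induction_on with
  | _ k ih =>
    intro hk p b
    rcases k with _ | k
    · exact sub_eq_zero.mpr (h0 p b hk)
    · -- column `k + 1` of `D` is read off column `k` of `nbrMatrix * D = D * nbrMatrix`
      have h := congrFun₂ hD p (⟨k, by omega⟩, b)
      rw [nbrMatrix_mul_apply, mul_nbrMatrix_apply, ih k (by omega), ih k (by omega)] at h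
      have hs : succRefl (⟨k, by omega⟩ : Fin N) = ⟨k + 1, hk⟩ :=
        Fin.ext (by simp only [succRefl]; omega)
      simp only [hs, predRefl] at h
      rw [ih (k - 1) (by omega), add_zero, add_zero] at h
      exact h.symm

lemma matT_apply_col_zero (A : Tensor m n N) (i : Fin N) (a : Fin m) (b : Fin n) (h0 : 0 < N) :
    matT A (i, a) (⟨0, h0⟩, b) = tube A a b i + tube A a b (i + 1) := by
  rw [matT_apply, thKernel]
  congr 2 <;> simp only [foldIndex] <;> omega

lemma tube_tenT (M : Matrix (Fin N × Fin m) (Fin N × Fin n) ℂ) (a : Fin m) (b : Fin n)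
    (h0 : 0 < N) {k : ℕ} (hk : k ≤ N) :
    tube (tenT M) a b k =
      ∑ t : Fin N, if k ≤ t then (-1 : ℂ) ^ (t - k : ℕ) * M (t, a) (⟨0, h0⟩, b) else 0 := by
  rcases lt_or_eq_of_le hk with hk | rfl
  · rw [tube, dif_pos hk]
    rfl
  · rw [tube_of_le _ _ _ le_rfl]
    exact (Finset.sum_eq_zero fun t _ => if_neg (by omega)).symm

lemma matT_tenT_apply_col_zero (M : Matrix (Fin N × Fin m) (Fin N × Fin n) ℂ) (i : Fin N)
    (a : Fin m) (b : Fin n) (h0 : 0 < N) :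
    matT (tenT M) (i, a) (⟨0, h0⟩, b) = M (i, a) (⟨0, h0⟩, b) := by
  rw [matT_apply_col_zero, tube_tenT M a b h0 i.isLt.le, tube_tenT M a b h0 (k := i + 1) i.isLt,
    ← Finset.sum_add_distrib, ← Fintype.sum_ite_eq' i fun t => M (t, a) (⟨0, h0⟩, b)]
  refine Finset.sum_congr rfl fun t _ => ?_
  rcases lt_trichotomy (t : ℕ) i with h | h | h
  · rw [if_neg (by omega), if_neg (by omega), if_neg (by omega), add_zero]
  · rw [if_pos h.ge, if_neg (by omega), if_pos (Fin.ext h), h, Nat.sub_self, pow_zero, one_mul,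
      add_zero]
  · rw [if_pos h.le, if_pos (Nat.succ_le_of_lt h), if_neg (by omega),
      show (t : ℕ) - i = t - (i + 1) + 1 by omega, pow_succ]
    ring

theorem matT_cmul (A : Tensor m n N) (B : Tensor n l N) :
    matT (cmul A B) = matT A * matT B := by
  refine eq_of_nbrMatrix_intertwines (nbrMatrix_mul_matT _) ?_
    fun ⟨i, a⟩ b h0 => matT_tenT_apply_col_zero _ i a b h0
  rw [← Matrix.mul_assoc, nbrMatrix_mul_matT, Matrix.mul_assoc, nbrMatrix_mul_matT,
    Matrix.mul_assoc]

theorem matT_injective : Function.Injective (matT : Tensor m n N → _) := by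
  intro A B hAB
  funext i
  ext a b
  have hcol (k : ℕ) (hk : k < N) :
      tube A a b k + tube A a b (k + 1) = tube B a b k + tube B a b (k + 1) := by
    rw [← matT_apply_col_zero A ⟨k, hk⟩ a b i.pos, ← matT_apply_col_zero B ⟨k, hk⟩ a b i.pos,
      hAB]
  have htop : tube A a b N = tube B a b N := by
    rw [tube_of_le A a b le_rfl, tube_of_le B a b le_rfl]
  simpa [tube] using eq_of_add_succ_eq htop hcol i.isLt.le

lemma tube_conjT (A : Tensor m n N) (a : Fin n) (b : Fin m) :
    tube (conjT A) a b = star (tube A b a) := by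
  funext k
  by_cases hk : k < N <;> simp [tube, conjT, hk]

theorem matT_conjT (A : Tensor m n N) : matT (conjT A) = (matT A)ᴴ := by
  ext ⟨i, a⟩ ⟨j, b⟩
  rw [Matrix.conjTranspose_apply, matT_apply, matT_apply, thKernel_comm _ _ i, tube_conjT]
  simp [thKernel]

lemma tube_idT (a b : Fin n) {k : ℕ} (hN : 0 < N) :
    tube (idT : Tensor n n N) a b k = if k = 0 then (1 : Matrix (Fin n) (Fin n) ℂ) a b else 0 := by
  by_cases hk : k < N
  · by_cases hk0 : k = 0 <;> simp [tube, idT, hk, hk0, hN]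
  · simp [tube, hk, show k ≠ 0 by omega]

theorem matT_idT : matT (idT : Tensor n n N) = 1 := by
  rcases Nat.eq_zero_or_pos N with rfl | hN
  · exact Subsingleton.elim _ _
  ext ⟨i, a⟩ ⟨j, b⟩
  have hToeplitz : foldIndex N (i - j) = 0 ↔ i = j := by simp only [foldIndex]; omega
  have hHankel : foldIndex N (i + j + 1) ≠ 0 := by simp only [foldIndex]; omega
  rw [matT_apply, thKernel, tube_idT a b hN, tube_idT a b hN, if_neg hHankel, add_zero]
  by_cases hij : i = j
  · rw [if_pos (hToeplitz.mpr hij), hij]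
    simp [Matrix.one_apply]
  · simp [mt hToeplitz.mp hij, hij]

theorem cmul_assoc (A : Tensor m n N) (B : Tensor n l N) (C : Tensor l r N) :
    cmul (cmul A B) C = cmul A (cmul B C) :=
  matT_injective <| by simp only [matT_cmul, Matrix.mul_assoc]

theorem idT_cmul (A : Tensor m n N) : cmul idT A = A :=
  matT_injective <| by rw [matT_cmul, matT_idT, Matrix.one_mul]

theorem conjT_conjT (A : Tensor m n N) : conjT (conjT A) = A :=
  funext fun i => Matrix.conjTranspose_conjTranspose (A i)

theorem conjT_cmul (A : Tensor m n N) (B : Tensor n l N) :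
    conjT (cmul A B) = cmul (conjT B) (conjT A) :=
  matT_injective <| by simp only [matT_conjT, matT_cmul, Matrix.conjTranspose_mul]

lemma conjT_cmul_cancel_left {U : Tensor m m N} (hU : cmul (conjT U) U = idT)
    (Z : Tensor m n N) : cmul (conjT U) (cmul U Z) = Z := by
  rw [← cmul_assoc, hU, idT_cmul]

theorem isMP_cmul_cmul_conjT {U : Tensor m m N} {S : Tensor m n N} {V : Tensor n n N}
    {Sd : Tensor n m N} (hU : cmul (conjT U) U = idT) (hV : cmul (conjT V) V = idT)
    (hSd : IsMP S Sd) :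
    IsMP (cmul (cmul U S) (conjT V)) (cmul (cmul V Sd) (conjT U)) := by
  obtain ⟨h1, h2, h3, h4⟩ := hSd
  rw [cmul_assoc] at h1 h2
  have hAX : cmul (cmul (cmul U S) (conjT V)) (cmul (cmul V Sd) (conjT U)) =
      cmul (cmul U (cmul S Sd)) (conjT U) := by
    simp only [cmul_assoc, conjT_cmul_cancel_left hV]
  have hXA : cmul (cmul (cmul V Sd) (conjT U)) (cmul (cmul U S) (conjT V)) =
      cmul (cmul V (cmul Sd S)) (conjT V) := by
    simp only [cmul_assoc, conjT_cmul_cancel_left hU]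
  refine ⟨?_, ?_, ?_, ?_⟩
  · rw [hAX]
    simp only [cmul_assoc, conjT_cmul_cancel_left hU]
    rw [← cmul_assoc Sd S, ← cmul_assoc S, h1]
  · rw [hXA]
    simp only [cmul_assoc, conjT_cmul_cancel_left hV]
    rw [← cmul_assoc S Sd, ← cmul_assoc Sd, h2]
  · rw [hAX, conjT_cmul, conjT_cmul, conjT_conjT, h3]
    simp only [cmul_assoc]
  · rw [hXA, conjT_cmul, conjT_cmul, conjT_conjT, h4]
    simp only [cmul_assoc]

end Tensor

theorem stmt2_general {n1 n2 n3 : ℕ} (A : Tensor n1 n2 n3)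
    (U : Tensor n1 n1 n3) (S : Tensor n1 n2 n3) (V : Tensor n2 n2 n3)
    (Sd : Tensor n2 n1 n3)
    (hU : Unitary U) (hV : Unitary V)
    (hA : A = cmul (cmul U S) (conjT V))
    (hSd : IsMP S Sd) :
    IsMP A (cmul (cmul V Sd) (conjT U)) :=
  hA ▸ isMP_cmul_cmul_conjT hU.1 hV.1 hSd

theorem stmt2 {n1 n2 n3 : ℕ} (A : Tensor n1 n2 n3)
    (U : Tensor n1 n1 n3) (S : Tensor n1 n2 n3) (V : Tensor n2 n2 n3)
    (Sd : Tensor n2 n1 n3)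
    (hU : Unitary U) (hV : Unitary V) (hS : FDiag S)
    (hA : A = cmul (cmul U S) (conjT V))
    (hSd : IsMP S Sd) :
    IsMP A (cmul (cmul V Sd) (conjT U)) :=
  stmt2_general A U S V Sd hU hV hA hSd
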